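/- Let a ∈ ℝ³, t > 0 and x ∈ ℝ³. Then the following integration-by-parts identity holds: ∫₀ᵗ s^{−3/2} ( a·∇G(t − s/2, x) − a·∇G(t, x) ) ds = −2 t^{−1/2} ( a·∇G(t/2, x) − a·∇G(t, x) ) − ∫₀ᵗ s^{−1/2} Δ(a·∇)G(t − s/2, x) ds, where both improper integrals converge (the singularity of the integrand at s = 0 being removable by the mean value theorem). -/

import Mathlib

open MeasureTheory Real Filter
open scoped ENNReal NNReal

/-- The `n`-dimensional Gaussian heat kernel `G(t,x) = (4πt)^{-n/2} exp(-|x|²/(4t))`. -/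
noncomputable def heatG (n : ℕ) (t : ℝ) (x : EuclideanSpace ℝ (Fin n)) : ℝ :=
  (4 * π * t) ^ (-(n : ℝ) / 2) * Real.exp (-‖x‖ ^ 2 / (4 * t))

/-- Directional derivative `a·∇f`. -/
noncomputable def dirD {n : ℕ} (a : EuclideanSpace ℝ (Fin n))
    (f : EuclideanSpace ℝ (Fin n) → ℝ) (x : EuclideanSpace ℝ (Fin n)) : ℝ :=
  fderiv ℝ f x a

/-- Partial derivative `∂_j f`. -/
noncomputable def pd {n : ℕ} (j : Fin n) (f : EuclideanSpace ℝ (Fin n) → ℝ)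
    (x : EuclideanSpace ℝ (Fin n)) : ℝ :=
  fderiv ℝ f x (EuclideanSpace.single j 1)

/-- Spatial Laplacian `Δf = Σ_j ∂_j² f`. -/
noncomputable def lap {n : ℕ} (f : EuclideanSpace ℝ (Fin n) → ℝ)
    (x : EuclideanSpace ℝ (Fin n)) : ℝ :=
  ∑ j : Fin n, pd j (fun z => pd j f z) x

/-- Multi-index spatial derivative `∇^α f = ∂_1^{α_1} ⋯ ∂_n^{α_n} f`. -/
noncomputable def mD {n : ℕ} (α : Fin n → ℕ) (f : EuclideanSpace ℝ (Fin n) → ℝ) :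
    EuclideanSpace ℝ (Fin n) → ℝ :=
  (List.finRange n).foldr (fun j g => (pd j)^[α j] g) f

/-- Iterated time derivative `∂_t^l F`. -/
noncomputable def tD {n : ℕ} (l : ℕ) (F : ℝ → EuclideanSpace ℝ (Fin n) → ℝ) :
    ℝ → EuclideanSpace ℝ (Fin n) → ℝ :=
  (fun H => fun t x => deriv (fun τ => H τ x) t)^[l] F

/-- `u` is a mild solution of `∂_t u - Δu = a·∇(u²)` with initial data `u₀`:
the Duhamel formula `u(t) = G(t)*u₀ + ∫₀ᵗ a·∇G(t-s) * u(s)² ds` holds. -/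
def IsMildSolution {n : ℕ} (a : EuclideanSpace ℝ (Fin n))
    (u₀ : EuclideanSpace ℝ (Fin n) → ℝ) (u : ℝ → EuclideanSpace ℝ (Fin n) → ℝ) : Prop :=
  ∀ t : ℝ, 0 < t → ∀ x, u t x = (∫ y, heatG n t (x - y) * u₀ y) +
    ∫ s in Set.Ioo (0:ℝ) t, ∫ y, dirD a (heatG n (t - s)) (x - y) * (u s y) ^ 2

/-- The decay exponent `γ_q = (n/2)(1 - 1/q)` (with `1/∞ = 0`). -/
noncomputable def gam (n : ℕ) (q : ℝ≥0∞) : ℝ := (n : ℝ) / 2 * (1 - 1 / q.toReal)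

/-- The decay estimate `‖u(t)‖_{L^q} ≤ C(1+t)^{-γ_q}` for all `1 ≤ q ≤ ∞` and `t > 0`. -/
def SatisfiesDecay {n : ℕ} (u : ℝ → EuclideanSpace ℝ (Fin n) → ℝ) : Prop :=
  ∀ q : ℝ≥0∞, 1 ≤ q → ∃ C : ℝ, 0 < C ∧ ∀ t : ℝ, 0 < t →
    eLpNorm (u t) q volume ≤ ENNReal.ofReal (C * (1 + t) ^ (-(gam n q)))


open Set
open scoped RealInnerProductSpace

abbrev E3 := EuclideanSpace ℝ (Fin 3)

lemma heatG_eq (τ : ℝ) : heatG 3 τ = fun z : E3 =>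
    (4 * π * τ) ^ (-(3:ℝ) / 2) * Real.exp (⟪z, z⟫ * (-(4 * τ)⁻¹)) := by
  funext z
  simp only [heatG, real_inner_self_eq_norm_sq]
  norm_num [div_eq_mul_inv]

lemma inner_self_hasFDerivAt (x : E3) :
    HasFDerivAt (fun z : E3 => ⟪z, z⟫) (2 • (innerSL ℝ x : E3 →L[ℝ] ℝ)) x := by
  have h := (hasFDerivAt_id x).inner ℝ (hasFDerivAt_id x)
  refine h.congr_fderiv ?_
  ext v
  simp [fderivInnerCLM_apply, real_inner_comm, two_smul]

lemma gauss_hasFDerivAt (C d : ℝ) (x : E3) :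
    HasFDerivAt (fun z : E3 => C * Real.exp (⟪z, z⟫ * d))
      ((C * Real.exp (⟪x, x⟫ * d) * (2 * d)) • (innerSL ℝ x : E3 →L[ℝ] ℝ)) x := by
  have h := (((inner_self_hasFDerivAt x).mul_const d).exp).const_mul C
  refine h.congr_fderiv ?_
  ext v
  simp [innerSL_apply_apply]
  ring

lemma dirD_heatG (a : E3) (τ : ℝ) (z : E3) :
    dirD a (heatG 3 τ) z = (4 * π * τ) ^ (-(3:ℝ) / 2) *
      Real.exp (⟪z, z⟫ * (-(4 * τ)⁻¹)) * (⟪a, z⟫ * -(2 * τ)⁻¹) := by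
  rw [dirD, heatG_eq τ]
  rw [(gauss_hasFDerivAt ((4 * π * τ) ^ (-(3:ℝ) / 2)) (-(4 * τ)⁻¹) z).fderiv]
  simp only [ContinuousLinearMap.coe_smul', Pi.smul_apply, innerSL_apply_apply, smul_eq_mul]
  rw [real_inner_comm z a]
  ring

lemma pd1 (a : E3) (C d k : ℝ) (j : Fin 3) (z : E3) :
    pd j (fun z : E3 => C * Real.exp (⟪z, z⟫ * d) * (⟪a, z⟫ * k)) z
      = C * Real.exp (⟪z, z⟫ * d) * (k * a j + ⟪a, z⟫ * (k * (2 * d)) * z j) := by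
  have h2 : HasFDerivAt (fun z : E3 => ⟪a, z⟫ * k) (k • (innerSL ℝ a : E3 →L[ℝ] ℝ)) z := by
    have h := ((innerSL ℝ a : E3 →L[ℝ] ℝ).hasFDerivAt (x := z)).mul_const k
    exact h
  have h := (gauss_hasFDerivAt C d z).mul h2
  rw [pd, (show HasFDerivAt (fun z : E3 => C * Real.exp (⟪z, z⟫ * d) * (⟪a, z⟫ * k)) _ z from h).fderiv]
  simp [innerSL_apply_apply, EuclideanSpace.inner_single_right]
  ring

lemma pd2 (a : E3) (C d c₁ c₂ : ℝ) (j : Fin 3) (z : E3) :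
    pd j (fun z : E3 => C * Real.exp (⟪z, z⟫ * d) * (c₁ + ⟪a, z⟫ * c₂ * z j)) z
      = C * Real.exp (⟪z, z⟫ * d) *
        ((2 * d) * z j * (c₁ + ⟪a, z⟫ * c₂ * z j) + c₂ * (a j * z j + ⟪a, z⟫)) := by
  have hz : HasFDerivAt (fun z : E3 => z j) (EuclideanSpace.proj (𝕜 := ℝ) j) z :=
    (EuclideanSpace.proj (𝕜 := ℝ) j).hasFDerivAt
  have h2 : HasFDerivAt (fun z : E3 => c₁ + ⟪a, z⟫ * c₂ * z j)
      ((⟪a, z⟫ * c₂) • (EuclideanSpace.proj (𝕜 := ℝ) j : E3 →L[ℝ] ℝ) +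
        (z j) • (c₂ • (innerSL ℝ a : E3 →L[ℝ] ℝ))) z := by
    have hax : HasFDerivAt (fun z : E3 => ⟪a, z⟫ * c₂) (c₂ • (innerSL ℝ a : E3 →L[ℝ] ℝ)) z := by
      have h := ((innerSL ℝ a : E3 →L[ℝ] ℝ).hasFDerivAt (x := z)).mul_const c₂
      exact h
    exact (hax.mul hz).const_add c₁
  have h := (gauss_hasFDerivAt C d z).mul h2
  rw [pd, (show HasFDerivAt (fun z : E3 => C * Real.exp (⟪z, z⟫ * d) * (c₁ + ⟪a, z⟫ * c₂ * z j)) _ z from h).fderiv]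
  simp [innerSL_apply_apply, EuclideanSpace.inner_single_right, EuclideanSpace.single_apply]
  ring

lemma lap_dirD (a : E3) (τ : ℝ) (hτ : τ ≠ 0) (z : E3) :
    lap (dirD a (heatG 3 τ)) z
      = dirD a (heatG 3 τ) z * (‖z‖ ^ 2 / (4 * τ ^ 2) - 5 / (2 * τ)) := by
  set C := (4 * π * τ) ^ (-(3:ℝ) / 2) with hC
  set d : ℝ := -(4 * τ)⁻¹ with hd
  set k : ℝ := -(2 * τ)⁻¹ with hk
  have hF : dirD a (heatG 3 τ) = fun w : E3 => C * Real.exp (⟪w, w⟫ * d) * (⟪a, w⟫ * k) :=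
    funext fun w => dirD_heatG a τ w
  have hb : ⟪a, z⟫ = ∑ j, a j * z j := by
    simp [PiLp.inner_apply, mul_comm]
  have hq : (‖z‖:ℝ) ^ 2 = ∑ j, z j * z j := by
    rw [← real_inner_self_eq_norm_sq, PiLp.inner_apply]; simp [sq]
  have key : ∀ j : Fin 3, pd j (fun w => pd j (dirD a (heatG 3 τ)) w) z
      = (C * Real.exp (⟪z, z⟫ * d) * (4 * d * k)) * (a j * z j)
        + (C * Real.exp (⟪z, z⟫ * d) * (4 * d ^ 2 * k) * ⟪a, z⟫) * (z j * z j)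
        + C * Real.exp (⟪z, z⟫ * d) * (2 * d * k) * ⟪a, z⟫ := by
    intro j
    have h1 : (fun w => pd j (dirD a (heatG 3 τ)) w)
        = fun w => C * Real.exp (⟪w, w⟫ * d) * (k * a j + ⟪a, w⟫ * (k * (2 * d)) * w j) := by
      funext w; rw [hF, pd1]
    rw [h1, pd2 a C d (k * a j) (k * (2 * d)) j z]
    ring
  rw [lap]
  rw [Finset.sum_congr rfl fun j _ => key j]
  rw [Finset.sum_add_distrib, Finset.sum_add_distrib, ← Finset.mul_sum, ← Finset.mul_sum,
    Finset.sum_const, Finset.card_univ]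
  rw [← hb, ← hq, hF]
  simp only [Fintype.card_fin, nsmul_eq_mul]
  have hq2 : ⟪z, z⟫ = (‖z‖:ℝ) ^ 2 := real_inner_self_eq_norm_sq z
  rw [hq2, hd, hk]
  field_simp
  ring

noncomputable def Kf (b q : ℝ) (τ : ℝ) : ℝ :=
  (4 * π * τ) ^ (-(3:ℝ) / 2) * Real.exp (q * (-(4 * τ)⁻¹)) * (b * -(2 * τ)⁻¹)

lemma Kf_hasDerivAt (b q : ℝ) {τ : ℝ} (hτ : 0 < τ) :
    HasDerivAt (Kf b q) (Kf b q τ * (q / (4 * τ ^ 2) - 5 / (2 * τ))) τ := by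
  have h4πτ : 4 * π * τ ≠ 0 := by positivity
  have h4τ : 4 * τ ≠ 0 := by positivity
  have h2τ : 2 * τ ≠ 0 := by positivity
  have hu2 : HasDerivAt (fun τ : ℝ => (4 * π * τ) ^ (-(3:ℝ) / 2))
      (4 * π * (-(3:ℝ)/2) * (4 * π * τ) ^ (-(3:ℝ)/2 - 1)) τ := by
    have hlin : HasDerivAt (fun τ : ℝ => 4 * π * τ) (4 * π) τ := by
      simpa using (hasDerivAt_id τ).const_mul (4 * π)
    exact hlin.rpow_const (Or.inl h4πτ)
  have hu3 : HasDerivAt (fun τ : ℝ => Real.exp (q * (-(4 * τ)⁻¹)))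
      (Real.exp (q * (-(4 * τ)⁻¹)) * (q * (4 / (4 * τ) ^ 2))) τ := by
    have hinv : HasDerivAt (fun τ : ℝ => (4 * τ)⁻¹) (-4 / (4 * τ) ^ 2) τ := by
      have hlin : HasDerivAt (fun τ : ℝ => 4 * τ) (4:ℝ) τ := by
        simpa using (hasDerivAt_id τ).const_mul (4:ℝ)
      exact hlin.inv h4τ
    have h' := ((hinv.neg).const_mul q).exp
    refine h'.congr_deriv ?_
    simp only [Pi.neg_apply]
    ring
  have hu1 : HasDerivAt (fun τ : ℝ => b * -(2 * τ)⁻¹) (b * (2 / (2 * τ) ^ 2)) τ := by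
    have hinv : HasDerivAt (fun τ : ℝ => (2 * τ)⁻¹) (-2 / (2 * τ) ^ 2) τ := by
      have hlin : HasDerivAt (fun τ : ℝ => 2 * τ) (2:ℝ) τ := by
        simpa using (hasDerivAt_id τ).const_mul (2:ℝ)
      exact hlin.inv h2τ
    have h' := (hinv.neg).const_mul b
    refine h'.congr_deriv ?_
    ring
  have h := (hu2.mul hu3).mul hu1
  refine h.congr_deriv ?_
  have hpow : (4 * π * τ) ^ (-(3:ℝ) / 2) = (4 * π * τ) ^ (-(3:ℝ)/2 - 1) * (4 * π * τ) := by
    rw [← Real.rpow_add_one h4πτ]; norm_num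
  simp only [Pi.mul_apply]
  rw [Kf, hpow]
  have hτ' : τ ≠ 0 := ne_of_gt hτ
  field_simp
  ring

lemma Kf_continuousAt (b q : ℝ) {τ : ℝ} (hτ : τ ≠ 0) : ContinuousAt (Kf b q) τ := by
  have h4πτ : 4 * π * τ ≠ 0 := by
    simp [Real.pi_ne_zero, hτ]
  have h1 : ContinuousAt (fun τ : ℝ => (4 * π * τ) ^ (-(3:ℝ) / 2)) τ := by
    exact (Real.continuousAt_rpow_const _ _ (Or.inl h4πτ)).comp
      ((continuous_const.mul continuous_id).continuousAt)
  have h2 : ContinuousAt (fun τ : ℝ => Real.exp (q * (-(4 * τ)⁻¹))) τ := by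
    apply Real.continuous_exp.continuousAt.comp
    exact continuousAt_const.mul (((continuous_const.mul continuous_id).continuousAt).inv₀
      (by simpa using hτ)).neg
  have h3 : ContinuousAt (fun τ : ℝ => b * -(2 * τ)⁻¹) τ :=
    continuousAt_const.mul (((continuous_const.mul continuous_id).continuousAt).inv₀
      (by simpa using hτ)).neg
  exact (h1.mul h2).mul h3

lemma factor_continuousAt (q : ℝ) {τ : ℝ} (hτ : τ ≠ 0) :
    ContinuousAt (fun τ : ℝ => q / (4 * τ ^ 2) - 5 / (2 * τ)) τ := by
  have h1 : ContinuousAt (fun τ : ℝ => q / (4 * τ ^ 2)) τ :=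
    continuousAt_const.div ((continuous_const.mul (continuous_pow 2)).continuousAt)
      (by simp [pow_eq_zero_iff, hτ])
  have h2 : ContinuousAt (fun τ : ℝ => 5 / (2 * τ)) τ :=
    continuousAt_const.div ((continuous_const.mul continuous_id).continuousAt)
      (by simpa using hτ)
  exact h1.sub h2

lemma main1d (b q t : ℝ) (ht : 0 < t) :
    IntegrableOn (fun s : ℝ => s ^ (-(3:ℝ)/2) * (Kf b q (t - s/2) - Kf b q t)) (Ioo 0 t) ∧
    IntegrableOn (fun s : ℝ => s ^ (-(1:ℝ)/2) *
      (Kf b q (t - s/2) * (q / (4 * (t - s/2) ^ 2) - 5 / (2 * (t - s/2))))) (Ioo 0 t) ∧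
    (∫ s in Ioo (0:ℝ) t, s ^ (-(3:ℝ)/2) * (Kf b q (t - s/2) - Kf b q t)) =
      -2 * t ^ (-(1:ℝ)/2) * (Kf b q (t/2) - Kf b q t) -
      ∫ s in Ioo (0:ℝ) t, s ^ (-(1:ℝ)/2) *
        (Kf b q (t - s/2) * (q / (4 * (t - s/2) ^ 2) - 5 / (2 * (t - s/2)))) := by
  set ψ : ℝ → ℝ := fun s => Kf b q (t - s/2) with hψdef
  set Lp : ℝ → ℝ := fun s =>
    Kf b q (t - s/2) * (q / (4 * (t - s/2) ^ 2) - 5 / (2 * (t - s/2))) with hLpdef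
  set c : ℝ := Kf b q t with hcdef
  have hψ0 : ψ 0 = c := by simp [hψdef, hcdef]
  -- derivative of ψ
  have hψd : ∀ s ∈ Icc (0:ℝ) t, HasDerivAt ψ (Lp s * (-(1/2))) s := by
    intro s hs
    have hτ : 0 < t - s/2 := by
      rcases hs with ⟨h1, h2⟩; linarith
    have hlin : HasDerivAt (fun s : ℝ => t - s/2) (-(1/2)) s := by
      simpa using ((hasDerivAt_id s).div_const 2).const_sub t
    have h := (Kf_hasDerivAt b q hτ).comp s hlin
    exact h
  -- continuity of Lp on Icc
  have hLpc : ContinuousOn Lp (Icc 0 t) := by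
    intro s hs
    have hτ : t - s/2 ≠ 0 := by
      rcases hs with ⟨h1, h2⟩; intro h; linarith
    have hlin : ContinuousAt (fun s : ℝ => t - s/2) s :=
      (continuous_const.sub (continuous_id.div_const 2)).continuousAt
    exact (ContinuousAt.comp (f := fun s : ℝ => t - s/2)
      ((Kf_continuousAt b q hτ).mul (factor_continuousAt q hτ)) hlin).continuousWithinAt
  obtain ⟨M, hM⟩ := isCompact_Icc.exists_bound_of_continuousOn hLpc
  have hM0 : 0 ≤ M := le_trans (norm_nonneg _) (hM 0 ⟨le_rfl, ht.le⟩)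
  -- MVT bound
  have hMVT : ∀ s ∈ Icc (0:ℝ) t, ‖ψ s - c‖ ≤ (M/2) * s := by
    intro s hs
    have h := Convex.norm_image_sub_le_of_norm_hasDerivWithin_le
      (f := ψ) (f' := fun s => Lp s * (-(1/2))) (s := Icc (0:ℝ) t) (C := M/2)
      (fun y hy => (hψd y hy).hasDerivWithinAt)
      (fun y hy => by
        rw [norm_mul]
        have : ‖(-(1/2) : ℝ)‖ = 1/2 := by norm_num
        rw [this]
        nlinarith [hM y hy, norm_nonneg (Lp y)])
      (convex_Icc 0 t) ⟨le_rfl, ht.le⟩ hs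
    rw [hψ0] at h
    simpa [abs_of_nonneg hs.1] using h
  -- integrable dominator
  have hdom : IntegrableOn (fun s : ℝ => s ^ (-(1:ℝ)/2)) (Ioo 0 t) := by
    rw [← intervalIntegrable_iff_integrableOn_Ioo_of_le ht.le]
    exact intervalIntegral.intervalIntegrable_rpow' (by norm_num)
  -- continuity of ψ on Icc
  have hψc : ContinuousOn ψ (Icc 0 t) := fun s hs => ((hψd s hs).continuousAt).continuousWithinAt
  have hrpowc : ∀ (r : ℝ), ContinuousOn (fun s : ℝ => s ^ r) (Ioo 0 t) :=
    fun r s hs => (Real.continuousAt_rpow_const s r (Or.inl hs.1.ne')).continuousWithinAt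
  have hIccsub : Ioo (0:ℝ) t ⊆ Icc 0 t := Ioo_subset_Icc_self
  have hpow31 : ∀ s : ℝ, s ∈ Ioo (0:ℝ) t → s ^ (-(3:ℝ)/2) * s = s ^ (-(1:ℝ)/2) := by
    intro s hs
    rw [← Real.rpow_add_one hs.1.ne']
    norm_num
  -- integrability of g1
  have hint1 : IntegrableOn (fun s : ℝ => s ^ (-(3:ℝ)/2) * (ψ s - c)) (Ioo 0 t) := by
    apply Integrable.mono' (hdom.const_mul (M/2))
    · exact (((hrpowc _).mul ((hψc.mono hIccsub).sub continuousOn_const)).aestronglyMeasurable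
        measurableSet_Ioo)
    · rw [ae_restrict_iff' measurableSet_Ioo]
      refine ae_of_all _ fun s hs => ?_
      have h1 : (0:ℝ) ≤ s ^ (-(3:ℝ)/2) := Real.rpow_nonneg hs.1.le _
      calc ‖s ^ (-(3:ℝ)/2) * (ψ s - c)‖ = s ^ (-(3:ℝ)/2) * ‖ψ s - c‖ := by
            rw [norm_mul, Real.norm_of_nonneg h1]
        _ ≤ s ^ (-(3:ℝ)/2) * ((M/2) * s) :=
            mul_le_mul_of_nonneg_left (hMVT s (hIccsub hs)) h1
        _ = (M/2) * (s ^ (-(3:ℝ)/2) * s) := by ring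
        _ = M/2 * s ^ (-(1:ℝ)/2) := by rw [hpow31 s hs]
  -- integrability of g2
  have hint2 : IntegrableOn (fun s : ℝ => s ^ (-(1:ℝ)/2) * Lp s) (Ioo 0 t) := by
    apply Integrable.mono' (hdom.const_mul M)
    · exact (((hrpowc _).mul (hLpc.mono hIccsub)).aestronglyMeasurable measurableSet_Ioo)
    · rw [ae_restrict_iff' measurableSet_Ioo]
      refine ae_of_all _ fun s hs => ?_
      have h1 : (0:ℝ) ≤ s ^ (-(1:ℝ)/2) := Real.rpow_nonneg hs.1.le _
      calc ‖s ^ (-(1:ℝ)/2) * Lp s‖ = s ^ (-(1:ℝ)/2) * ‖Lp s‖ := by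
            rw [norm_mul, Real.norm_of_nonneg h1]
        _ ≤ s ^ (-(1:ℝ)/2) * M := mul_le_mul_of_nonneg_left (hM s (hIccsub hs)) h1
        _ = M * s ^ (-(1:ℝ)/2) := by ring
  -- the antiderivative
  set Φ : ℝ → ℝ := fun s => -2 * s ^ (-(1:ℝ)/2) * (ψ s - c) with hΦdef
  have hΦ0 : Φ 0 = 0 := by simp [hΦdef, hψ0]
  have hΦc : ContinuousOn Φ (Icc 0 t) := by
    intro s hs
    rcases eq_or_ne s 0 with rfl | hs0
    · show Tendsto Φ (nhdsWithin 0 (Icc 0 t)) (nhds (Φ 0))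
      rw [hΦ0]
      apply squeeze_zero_norm' (a := fun s => M * s ^ ((1:ℝ)/2))
      · filter_upwards [self_mem_nhdsWithin] with s hs
        rcases eq_or_lt_of_le (hs.1 : (0:ℝ) ≤ s) with rfl | hspos
        · simp [hΦ0, Real.zero_rpow, (by norm_num : ((1:ℝ)/2) ≠ 0)]
        · have h1 : (0:ℝ) ≤ s ^ (-(1:ℝ)/2) := Real.rpow_nonneg hs.1 _
          have hps : s ^ (-(1:ℝ)/2) * s = s ^ ((1:ℝ)/2) := by
            rw [← Real.rpow_add_one hspos.ne']
            norm_num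
          calc ‖Φ s‖ = 2 * s ^ (-(1:ℝ)/2) * ‖ψ s - c‖ := by
                rw [hΦdef]
                simp only [norm_mul, Real.norm_of_nonneg h1]
                norm_num
            _ ≤ 2 * s ^ (-(1:ℝ)/2) * ((M/2) * s) := by
                apply mul_le_mul_of_nonneg_left (hMVT s hs)
                positivity
            _ = M * (s ^ (-(1:ℝ)/2) * s) := by ring
            _ = M * s ^ ((1:ℝ)/2) := by rw [hps]
      · have : Tendsto (fun s : ℝ => M * s ^ ((1:ℝ)/2)) (nhds 0) (nhds (M * (0:ℝ) ^ ((1:ℝ)/2))) :=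
          (continuousAt_const.mul
            (Real.continuousAt_rpow_const 0 ((1:ℝ)/2) (Or.inr (by norm_num)))).tendsto
        have h0 : M * (0:ℝ) ^ ((1:ℝ)/2) = 0 := by
          rw [Real.zero_rpow (by norm_num : ((1:ℝ)/2) ≠ 0)]; ring
        rw [h0] at this
        exact this.mono_left nhdsWithin_le_nhds
    · have h1 : ContinuousAt (fun s : ℝ => -2 * s ^ (-(1:ℝ)/2)) s :=
        continuousAt_const.mul (Real.continuousAt_rpow_const s _ (Or.inl hs0))
      exact (h1.continuousWithinAt.mul ((hψc s hs).sub continuousWithinAt_const))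
  -- derivative of Φ on the interior
  set G : ℝ → ℝ := fun s => s ^ (-(3:ℝ)/2) * (ψ s - c) + s ^ (-(1:ℝ)/2) * Lp s with hGdef
  have hΦd : ∀ s ∈ Ioo (0:ℝ) t, HasDerivAt Φ (G s) s := by
    intro s hs
    have h1 : HasDerivAt (fun s : ℝ => s ^ (-(1:ℝ)/2)) ((-(1:ℝ)/2) * s ^ (-(1:ℝ)/2 - 1)) s :=
      Real.hasDerivAt_rpow_const (Or.inl hs.1.ne')
    have h2 := ((h1.const_mul (-2)).mul ((hψd s (hIccsub hs)).sub_const c))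
    have hexp : -(1:ℝ)/2 - 1 = -(3:ℝ)/2 := by norm_num
    rw [hexp] at h2
    refine h2.congr_deriv ?_
    rw [hGdef]
    ring
  -- FTC
  have hii : IntervalIntegrable G volume 0 t := by
    rw [intervalIntegrable_iff_integrableOn_Ioo_of_le ht.le]
    exact hint1.add hint2
  have hFTC := intervalIntegral.integral_eq_sub_of_hasDeriv_right_of_le ht.le hΦc
    (fun s hs => (hΦd s hs).hasDerivWithinAt) hii
  rw [hΦ0, sub_zero, intervalIntegral.integral_of_le ht.le, integral_Ioc_eq_integral_Ioo] at hFTC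
  have hadd : ∫ s in Ioo (0:ℝ) t, G s =
      (∫ s in Ioo (0:ℝ) t, s ^ (-(3:ℝ)/2) * (ψ s - c)) +
      ∫ s in Ioo (0:ℝ) t, s ^ (-(1:ℝ)/2) * Lp s := integral_add hint1 hint2
  have h12 : t - t/2 = t/2 := by ring
  have hΦt : Φ t = -2 * t ^ (-(1:ℝ)/2) * (Kf b q (t/2) - c) := by
    rw [hΦdef]
    simp only [hψdef]
    rw [h12]
  refine ⟨hint1, hint2, ?_⟩
  rw [hadd, hΦt] at hFTC
  simp only [hψdef, hLpdef] at hFTC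
  linarith [hFTC]

lemma dirD_heatG' (a : E3) (τ : ℝ) (z : E3) :
    dirD a (heatG 3 τ) z = Kf ⟪a, z⟫ (‖z‖ ^ 2) τ := by
  rw [dirD_heatG, Kf, real_inner_self_eq_norm_sq]

/-- integration-by-parts identity for the heat kernel, with convergence of both
improper integrals. -/
theorem integration_by_parts_identity (a : EuclideanSpace ℝ (Fin 3)) (t : ℝ) (ht : 0 < t)
    (x : EuclideanSpace ℝ (Fin 3)) :
    IntegrableOn (fun s : ℝ => s ^ (-(3 : ℝ) / 2) *
        (dirD a (heatG 3 (t - s / 2)) x - dirD a (heatG 3 t) x)) (Set.Ioo 0 t) ∧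
    IntegrableOn (fun s : ℝ => s ^ (-(1 : ℝ) / 2) *
        lap (dirD a (heatG 3 (t - s / 2))) x) (Set.Ioo 0 t) ∧
    (∫ s in Set.Ioo (0 : ℝ) t, s ^ (-(3 : ℝ) / 2) *
        (dirD a (heatG 3 (t - s / 2)) x - dirD a (heatG 3 t) x)) =
      -2 * t ^ (-(1 : ℝ) / 2) * (dirD a (heatG 3 (t / 2)) x - dirD a (heatG 3 t) x) -
        ∫ s in Set.Ioo (0 : ℝ) t, s ^ (-(1 : ℝ) / 2) *
          lap (dirD a (heatG 3 (t - s / 2))) x := by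
  obtain ⟨h1, h2, h3⟩ := main1d ⟪a, x⟫ (‖x‖ ^ 2) t ht
  have hd : ∀ τ : ℝ, dirD a (heatG 3 τ) x = Kf ⟪a, x⟫ (‖x‖ ^ 2) τ :=
    fun τ => dirD_heatG' a τ x
  have hl : ∀ s ∈ Set.Ioo (0:ℝ) t, lap (dirD a (heatG 3 (t - s / 2))) x =
      Kf ⟪a, x⟫ (‖x‖ ^ 2) (t - s/2) *
        (‖x‖ ^ 2 / (4 * (t - s/2) ^ 2) - 5 / (2 * (t - s/2))) := by
    intro s hs
    have hτ : t - s/2 ≠ 0 := by rcases hs with ⟨hs1, hs2⟩; intro h; linarith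
    rw [lap_dirD a _ hτ, hd]
  have e1 : EqOn (fun s : ℝ => s ^ (-(3:ℝ)/2) * (Kf ⟪a, x⟫ (‖x‖ ^ 2) (t - s/2)
        - Kf ⟪a, x⟫ (‖x‖ ^ 2) t))
      (fun s : ℝ => s ^ (-(3 : ℝ) / 2) *
        (dirD a (heatG 3 (t - s / 2)) x - dirD a (heatG 3 t) x)) (Set.Ioo 0 t) := by
    intro s _; simp only [hd]
  have e2 : EqOn (fun s : ℝ => s ^ (-(1:ℝ)/2) * (Kf ⟪a, x⟫ (‖x‖ ^ 2) (t - s/2) *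
        (‖x‖ ^ 2 / (4 * (t - s/2) ^ 2) - 5 / (2 * (t - s/2)))))
      (fun s : ℝ => s ^ (-(1 : ℝ) / 2) *
        lap (dirD a (heatG 3 (t - s / 2))) x) (Set.Ioo 0 t) := by
    intro s hs; simp only [hl s hs]
  refine ⟨h1.congr_fun e1 measurableSet_Ioo, h2.congr_fun e2 measurableSet_Ioo, ?_⟩
  rw [← setIntegral_congr_fun measurableSet_Ioo e1, ← setIntegral_congr_fun measurableSet_Ioo e2,
    h3, hd, hd]
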